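/- Let b = λ + iη with λ, η ∈ ℝ and λ > 0, and let 𝒫̂ₖ(b;x) = (2ᵏ(λ)ₖ/(2λ)ₖ)·𝒫ₖ(b;x) be the monic complementary Romanovski–Routh polynomials. Then for every k ≥ 0, 𝒫̂ₖ(b;0) = (−i)ᵏ · Σ_{j=0}^{k} [(−k)_j (b)_j/((2λ)_j · j!)]·2^j (a terminating ₂F₁(−k, b; 2λ; 2) evaluation); in particular, for integers L ≥ 0 and b = L+1−iη, the Taylor coefficients A_k^L(η) in the expansion F_L(η,w) = C_L(η)·w^{L+1}·Σ_{k=L+1}^{∞} A_k^L(η) w^{k−L−1} of the regular Coulomb wave function satisfy A_{k+L+1}^L(η) = ((−i)ᵏ/k!)·₂F₁(−k, L+1−iη; 2L+2; 2). -/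

import Mathlib

/-!
At `x = 0` the recurrence of the monic polynomials becomes the three-term recurrence
`(2λ + k + 1) 𝒫̂ₖ₊₂ = -2η 𝒫̂ₖ₊₁ - (k + 1) 𝒫̂ₖ`. After the substitution `𝒫̂ₖ(b;0) = (-i)ᵏ Fₖ` this is
the contiguous relation in the first parameter of `Fₖ = ₂F₁(-k, b; c; z)` at `c = 2λ`, `z = 2`.
That relation is proved by telescoping, with the Zeilberger certificate `j (j + c - 1) tⱼ` where
`tⱼ` is the `j`-th term of `₂F₁(-k-2, b; c; z)`. Both sides agree for `k = 0, 1`. The statement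
about `A_k^L` is the case `b = L + 1 - iη`.
-/

open Complex Finset

/-- Pochhammer symbol `(a)ₖ` over ℂ. -/
noncomputable def poch (a : ℂ) (k : ℕ) : ℂ := Polynomial.eval a (ascPochhammer ℂ k)

/-- Complementary Romanovski–Routh polynomials `𝒫ₙ(b;x)` with `b = λ + iη`,
defined by the three-term recurrence, evaluated at complex `x`. -/
noncomputable def crr (lam eta : ℝ) : ℕ → ℂ → ℂ
  | 0, _ => 1
  | 1, x => x - ((eta / lam : ℝ) : ℂ)
  | n + 2, x =>
      (x - ((eta / (lam + n + 1) : ℝ) : ℂ)) * crr lam eta (n + 1) x -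
        (((n + 1) * (2 * lam + n) / (4 * (lam + n) * (lam + n + 1)) : ℝ) : ℂ) *
          (x ^ 2 + 1) * crr lam eta n x

/-- Monic complementary Romanovski–Routh polynomials
`𝒫̂ₙ(b;x) = (2ⁿ(λ)ₙ/(2λ)ₙ)·𝒫ₙ(b;x)`. -/
noncomputable def crrMonic (lam eta : ℝ) (n : ℕ) (x : ℂ) : ℂ :=
  ((2 : ℂ) ^ n * poch (lam : ℂ) n / poch (2 * lam) n) * crr lam eta n x

open scoped Nat

section Pochhammer

lemma poch_zero (a : ℂ) : poch a 0 = 1 := by simp [poch]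

lemma poch_succ (a : ℂ) (n : ℕ) : poch a (n + 1) = poch a n * (a + n) := by
  simp [poch, ascPochhammer_succ_eval]

lemma poch_succ_left (a : ℂ) (n : ℕ) : poch a (n + 1) = a * poch (a + 1) n := by
  simp [poch, ascPochhammer_succ_left, Polynomial.eval_comp]

lemma poch_neg_natCast_of_lt {m j : ℕ} (h : m < j) : poch (-(m : ℂ)) j = 0 :=
  ascPochhammer_eval_neg_coe_nat_of_lt h

lemma poch_ne_zero {c : ℂ} (hc : ∀ n : ℕ, c + n ≠ 0) (j : ℕ) : poch c j ≠ 0 := by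
  rintro h
  obtain ⟨n, -, hn⟩ := (ascPochhammer_eval_eq_zero_iff j c).1 h
  exact hc n (by rw [hn]; ring)

lemma ofReal_add_natCast_ne_zero {x : ℝ} (hx : 0 < x) (n : ℕ) : (x : ℂ) + n ≠ 0 := by
  exact_mod_cast (by positivity : x + n ≠ 0)

end Pochhammer

section Hypergeometric

noncomputable def hyp2F1Term (a b c z : ℂ) (j : ℕ) : ℂ :=
  poch a j * poch b j / (poch c j * (j ! : ℂ)) * z ^ j

noncomputable def hyp2F1Terminating (n : ℕ) (b c z : ℂ) : ℂ :=
  ∑ j ∈ range (n + 1), hyp2F1Term (-(n : ℂ)) b c z j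

variable {b c z : ℂ}

lemma hyp2F1Term_zero (a b c z : ℂ) : hyp2F1Term a b c z 0 = 1 := by
  simp [hyp2F1Term, poch_zero]

lemma hyp2F1Term_one (a b c z : ℂ) : hyp2F1Term a b c z 1 = a * b / c * z := by
  simp [hyp2F1Term, poch_succ, poch_zero]

lemma mul_hyp2F1Term_add_one_left (a : ℂ) (j : ℕ) :
    a * hyp2F1Term (a + 1) b c z j = (a + j) * hyp2F1Term a b c z j := by
  have h := (poch_succ a j).symm.trans (poch_succ_left a j)
  simp only [hyp2F1Term]
  linear_combination -(poch b j / (poch c j * (j ! : ℂ)) * z ^ j) * h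

lemma mul_hyp2F1Term_succ (a : ℂ) {j : ℕ} (hc : c + j ≠ 0) :
    (c + j) * (j + 1) * hyp2F1Term a b c z (j + 1)
      = (a + j) * (b + j) * z * hyp2F1Term a b c z j := by
  simp only [hyp2F1Term, poch_succ, Nat.factorial_succ, pow_succ]
  by_cases hp : poch c j = 0
  · simp [hp]
  push_cast
  field_simp

lemma hyp2F1Term_neg_natCast_of_lt {n j : ℕ} (h : n < j) :
    hyp2F1Term (-(n : ℂ)) b c z j = 0 := by
  simp [hyp2F1Term, poch_neg_natCast_of_lt h]

lemma hyp2F1Terminating_eq_sum_range {n N : ℕ} (h : n + 1 ≤ N) :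
    hyp2F1Terminating n b c z = ∑ j ∈ range N, hyp2F1Term (-(n : ℂ)) b c z j := by
  refine sum_subset (range_subset_range.2 h) fun j _ hj => hyp2F1Term_neg_natCast_of_lt ?_
  simpa using hj

lemma hyp2F1Term_contiguous_telescope (hc : ∀ n : ℕ, c + n ≠ 0) (k j : ℕ) :
    ((k : ℂ) + 2) * ((c + k + 1) * hyp2F1Term (-((k + 2 : ℕ) : ℂ)) b c z j
        + ((b + k + 1) * z - c - 2 * k - 2) * hyp2F1Term (-((k + 1 : ℕ) : ℂ)) b c z j
        - (k + 1) * (z - 1) * hyp2F1Term (-(k : ℂ)) b c z j)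
      = j * (j + c - 1) * hyp2F1Term (-((k + 2 : ℕ) : ℂ)) b c z j
        - (j + 1) * (j + 1 + c - 1) * hyp2F1Term (-((k + 2 : ℕ) : ℂ)) b c z (j + 1) := by
  have h1 := mul_hyp2F1Term_add_one_left (b := b) (c := c) (z := z) (-((k + 2 : ℕ) : ℂ)) j
  have h0 := mul_hyp2F1Term_add_one_left (b := b) (c := c) (z := z) (-((k + 1 : ℕ) : ℂ)) j
  have hs := mul_hyp2F1Term_succ (b := b) (z := z) (-((k + 2 : ℕ) : ℂ)) (hc j)
  push_cast at h1 h0 hs ⊢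
  rw [show -((k : ℂ) + 2) + 1 = -((k : ℂ) + 1) by ring] at h1
  rw [show -((k : ℂ) + 1) + 1 = -(k : ℂ) by ring] at h0
  linear_combination hs + ((k : ℂ) + 2) * (z - 1) * h0
    - ((b + k + 1) * z - c - 2 * k - 2 + (z - 1) * (j - k - 1)) * h1

theorem hyp2F1Terminating_contiguous (hc : ∀ n : ℕ, c + n ≠ 0) (k : ℕ) :
    (c + k + 1) * hyp2F1Terminating (k + 2) b c z
      + ((b + k + 1) * z - c - 2 * k - 2) * hyp2F1Terminating (k + 1) b c z
      - (k + 1) * (z - 1) * hyp2F1Terminating k b c z = 0 := by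
  have hk : (k : ℂ) + 2 ≠ 0 := by exact_mod_cast (by positivity : (k : ℝ) + 2 ≠ 0)
  refine (mul_eq_zero.1 ?_).resolve_left hk
  let G : ℕ → ℂ := fun j => j * (j + c - 1) * hyp2F1Term (-((k + 2 : ℕ) : ℂ)) b c z j
  have hG : G (k + 3) = 0 := by
    simp only [G, hyp2F1Term_neg_natCast_of_lt (show k + 2 < k + 3 by omega), mul_zero]
  rw [hyp2F1Terminating_eq_sum_range (N := k + 3) le_rfl,
    hyp2F1Terminating_eq_sum_range (N := k + 3) (by omega),
    hyp2F1Terminating_eq_sum_range (N := k + 3) (by omega), mul_sum, mul_sum, mul_sum,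
    ← sum_add_distrib, ← sum_sub_distrib, mul_sum]
  calc ∑ j ∈ range (k + 3), _ = ∑ j ∈ range (k + 3), (G j - G (j + 1)) := by
        refine sum_congr rfl fun j _ => ?_
        rw [hyp2F1Term_contiguous_telescope hc]
        simp only [G]
        push_cast
        ring
    _ = 0 := by rw [sum_range_sub', hG]; simp [G]

end Hypergeometric

section RomanovskiRouth

variable {lam : ℝ} (eta : ℝ)

lemma crrMonic_zero (x : ℂ) : crrMonic lam eta 0 x = 1 := by
  simp [crrMonic, crr, poch_zero]

lemma crrMonic_one (hlam : 0 < lam) (x : ℂ) : crrMonic lam eta 1 x = x - eta / lam := by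
  have h : (lam : ℂ) ≠ 0 := by exact_mod_cast hlam.ne'
  simp only [crrMonic, crr, poch_succ, poch_zero]
  push_cast
  field_simp
  ring

theorem crrMonic_add_two (hlam : 0 < lam) (k : ℕ) (x : ℂ) :
    (2 * lam + k + 1) * crrMonic lam eta (k + 2) x
      = 2 * ((lam + k + 1) * x - eta) * crrMonic lam eta (k + 1) x
        - (k + 1) * (x ^ 2 + 1) * crrMonic lam eta k x := by
  have h2lam : poch (2 * lam) k ≠ 0 :=
    poch_ne_zero (by exact_mod_cast ofReal_add_natCast_ne_zero (by positivity : 0 < 2 * lam)) k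
  have hlk : (lam : ℂ) + k ≠ 0 := by exact_mod_cast (by positivity : lam + k ≠ 0)
  have hlk1 : (lam : ℂ) + k + 1 ≠ 0 := by exact_mod_cast (by positivity : lam + k + 1 ≠ 0)
  have h2lk : 2 * (lam : ℂ) + k ≠ 0 := by exact_mod_cast (by positivity : 2 * lam + k ≠ 0)
  have h2lk1 : 2 * (lam : ℂ) + k + 1 ≠ 0 := by
    exact_mod_cast (by positivity : 2 * lam + k + 1 ≠ 0)
  simp only [crrMonic, crr, poch_succ]
  push_cast
  simp only [← add_assoc]
  field_simp
  ring

theorem crrMonic_eval_zero (hlam : 0 < lam) (k : ℕ) :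
    crrMonic lam eta k 0 = (-I) ^ k * hyp2F1Terminating k (lam + eta * I) (2 * lam) 2 := by
  have hc : ∀ n : ℕ, 2 * (lam : ℂ) + n ≠ 0 := by
    exact_mod_cast ofReal_add_natCast_ne_zero (by positivity : 0 < 2 * lam)
  induction k using Nat.twoStepInduction with
  | zero => simp [crrMonic_zero, hyp2F1Terminating, hyp2F1Term_zero]
  | one =>
    have h : (lam : ℂ) ≠ 0 := by exact_mod_cast hlam.ne'
    rw [crrMonic_one eta hlam, hyp2F1Terminating, sum_range_succ, sum_range_one,
      hyp2F1Term_zero, hyp2F1Term_one]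
    field_simp
    linear_combination -(eta : ℂ) * I_sq
  | more k ih₀ ih₁ =>
    have hF := hyp2F1Terminating_contiguous (b := lam + eta * I) (z := 2) hc k
    refine mul_left_cancel₀ (hc (k + 1)) ?_
    push_cast
    rw [← add_assoc, crrMonic_add_two eta hlam, ih₀, ih₁]
    linear_combination (-I) ^ k * hF
      - (2 * lam + k + 1) * (-I) ^ k * hyp2F1Terminating (k + 2) (lam + eta * I) (2 * lam) 2 * I_sq

end RomanovskiRouth

theorem stmt19 :
    (∀ (lam eta : ℝ), 0 < lam → ∀ k : ℕ,
        crrMonic lam eta k 0 =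
          (-I) ^ k *
            ∑ j ∈ Finset.range (k + 1),
              poch (-(k : ℂ)) j * poch ((lam : ℂ) + (eta : ℂ) * I) j /
                  (poch (2 * lam) j * (Nat.factorial j : ℂ)) * 2 ^ j) ∧
      ∀ (L : ℕ) (eta : ℝ) (A : ℕ → ℂ),
        (∀ k : ℕ, (Nat.factorial k : ℂ) * A (k + L + 1) =
          crrMonic (L + 1) (-eta) k 0) →
        ∀ k : ℕ,
          A (k + L + 1) =
            (-I) ^ k / (Nat.factorial k : ℂ) *
              ∑ j ∈ Finset.range (k + 1),
                poch (-(k : ℂ)) j * poch ((L : ℂ) + 1 - (eta : ℂ) * I) j /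
                    (poch (2 * (L : ℂ) + 2) j * (Nat.factorial j : ℂ)) * 2 ^ j := by
  refine ⟨fun lam eta hlam k => crrMonic_eval_zero eta hlam k, fun L eta A hA k => ?_⟩
  have h := crrMonic_eval_zero (-eta) (by positivity : (0 : ℝ) < L + 1) k
  rw [← hA k] at h
  have hb : (((L + 1 : ℝ) : ℂ) + ((-eta : ℝ) : ℂ) * I) = (L : ℂ) + 1 - eta * I := by
    push_cast; ring
  have hc : 2 * (((L + 1 : ℝ)) : ℂ) = 2 * (L : ℂ) + 2 := by push_cast; ring
  rw [hb, hc] at h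
  rw [div_mul_eq_mul_div, eq_div_iff (Nat.cast_ne_zero.2 k.factorial_ne_zero), mul_comm, h]
  rfl
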